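/- Let f ∈ V*, g ∈ Q*, let K := { v ∈ V : b(v,ψ) = 0 for all ψ ∈ Q } (the divergence-free subspace), and suppose u_S ∈ K satisfies ⟨u_S,φ⟩_V = f(φ) for all φ ∈ K. For each ε > 0 let (u_ε, p_ε) ∈ V × Q solve the ε-Stokes system ES(ε). Then u_ε converges weakly to u_S in V as ε → 0⁺, i.e. for every w ∈ V, ⟨u_ε, w⟩_V → ⟨u_S, w⟩_V as ε → 0 along (0,∞). (Weak convergence part of Theorem 4.2.) -/

import Mathlib

/-!
The energy identity `‖u_ε‖² + ε‖p_ε‖² = f(u_ε) + ε g(p_ε)` bounds `u_ε` uniformly and gives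
`‖ε p_ε‖ = O(√ε)`, so `b(u_ε, q) = ε(⟪p_ε, q⟫ - g(q)) → 0` for every `q`. Writing `G q` for the
Riesz representative of `b(·, q)`, the divergence-free subspace is `(range G)ᗮ`, and every
`w ∈ V` splits as `w = z + y` with `z ∈ closure (range G)` and `y ∈ (range G)ᗮ`. On `y` the first
equation gives `⟪u_ε, y⟫ = f(y) = ⟪u_S, y⟫` exactly; on `range G` we have `⟪u_ε, G q⟫ = b(u_ε, q) → 0`,
which extends to its closure because `u_ε` is bounded, and `⟪u_S, z⟫ = 0`.
-/

open Filter Topology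
open scoped RealInnerProductSpace

theorem tendsto_inner_zero_of_mem_closure {α E : Type*} [NormedAddCommGroup E]
    [InnerProductSpace ℝ E] {l : Filter α} {u : α → E} {C : ℝ} (hu : ∀ᶠ a in l, ‖u a‖ ≤ C)
    {s : Set E} (hs : ∀ v ∈ s, Tendsto (fun a => ⟪u a, v⟫) l (𝓝 0)) {z : E}
    (hz : z ∈ closure s) :
    Tendsto (fun a => ⟪u a, z⟫) l (𝓝 0) := by
  rw [Metric.tendsto_nhds]
  intro η hη
  have hC : 0 < |C| + 1 := by positivity
  obtain ⟨v, hv, hzv⟩ := Metric.mem_closure_iff.mp hz (η / 2 / (|C| + 1)) (by positivity)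
  rw [dist_eq_norm, lt_div_iff₀ hC] at hzv
  filter_upwards [hu, Metric.tendsto_nhds.mp (hs v hv) (η / 2) (half_pos hη)] with a hua hva
  rw [Real.dist_0_eq_abs] at hva ⊢
  calc |⟪u a, z⟫| = |⟪u a, z - v⟫ + ⟪u a, v⟫| := by rw [inner_sub_right, sub_add_cancel]
    _ ≤ ‖u a‖ * ‖z - v‖ + |⟪u a, v⟫| :=
      (abs_add_le _ _).trans (by gcongr; exact abs_real_inner_le_norm _ _)
    _ ≤ ‖z - v‖ * (|C| + 1) + |⟪u a, v⟫| := by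
      rw [mul_comm]
      gcongr
      linarith [le_abs_self C]
    _ < η / 2 + η / 2 := add_lt_add hzv hva
    _ = η := add_halves η

section EpsStokes

variable {V Q : Type*} [NormedAddCommGroup V] [InnerProductSpace ℝ V]
  [NormedAddCommGroup Q] [InnerProductSpace ℝ Q]

def IsEpsStokesSolution (b : V →L[ℝ] Q →L[ℝ] ℝ) (f : V →L[ℝ] ℝ) (g : Q →L[ℝ] ℝ) (ε : ℝ)
    (u : V) (p : Q) : Prop :=
  (∀ φ : V, ⟪u, φ⟫ + b φ p = f φ) ∧ (∀ ψ : Q, ε * ⟪p, ψ⟫ - b u ψ = ε * g ψ)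

variable {b : V →L[ℝ] Q →L[ℝ] ℝ} {f : V →L[ℝ] ℝ} {g : Q →L[ℝ] ℝ}

namespace IsEpsStokesSolution

variable {ε : ℝ} {u : V} {p : Q}

theorem norm_sq_add_le (h : IsEpsStokesSolution b f g ε u p) (hε : 0 ≤ ε) :
    ‖u‖ ^ 2 + ε * ‖p‖ ^ 2 ≤ ‖f‖ ^ 2 + ε * ‖g‖ ^ 2 := by
  have energy : ‖u‖ ^ 2 + ε * ‖p‖ ^ 2 = f u + ε * g p := by
    have h₁ := h.1 u
    have h₂ := h.2 p
    rw [real_inner_self_eq_norm_sq] at h₁ h₂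
    linarith
  have hf : f u ≤ ‖f‖ * ‖u‖ := (le_abs_self _).trans (f.le_opNorm u)
  have hg : g p ≤ ‖g‖ * ‖p‖ := (le_abs_self _).trans (g.le_opNorm p)
  nlinarith [sq_nonneg (‖u‖ - ‖f‖), mul_nonneg hε (sq_nonneg (‖p‖ - ‖g‖)),
    mul_le_mul_of_nonneg_left hg hε]

theorem norm_sq_le (h : IsEpsStokesSolution b f g ε u p) (hε₀ : 0 ≤ ε) (hε₁ : ε ≤ 1) :
    ‖u‖ ^ 2 ≤ ‖f‖ ^ 2 + ‖g‖ ^ 2 := by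
  nlinarith [h.norm_sq_add_le hε₀, mul_nonneg hε₀ (sq_nonneg ‖p‖), sq_nonneg ‖g‖]

theorem norm_smul_sq_le (h : IsEpsStokesSolution b f g ε u p) (hε₀ : 0 ≤ ε) (hε₁ : ε ≤ 1) :
    ‖ε • p‖ ^ 2 ≤ ε * (‖f‖ ^ 2 + ‖g‖ ^ 2) := by
  have := h.norm_sq_add_le hε₀
  calc ‖ε • p‖ ^ 2 = ε * (ε * ‖p‖ ^ 2) := by rw [norm_smul, Real.norm_of_nonneg hε₀]; ring
    _ ≤ ε * (‖f‖ ^ 2 + ‖g‖ ^ 2) := by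
      gcongr
      nlinarith [sq_nonneg ‖u‖, sq_nonneg ‖g‖]

theorem apply_eq (h : IsEpsStokesSolution b f g ε u p) (ψ : Q) :
    b u ψ = ⟪ε • p, ψ⟫ - ε * g ψ := by
  rw [real_inner_smul_left]
  linarith [h.2 ψ]

end IsEpsStokesSolution

variable {u : ℝ → V} {p : ℝ → Q}

theorem eventually_norm_le_of_isEpsStokesSolution
    (hsol : ∀ ε : ℝ, 0 < ε → IsEpsStokesSolution b f g ε (u ε) (p ε)) :
    ∀ᶠ ε in 𝓝[>] 0, ‖u ε‖ ≤ √(‖f‖ ^ 2 + ‖g‖ ^ 2) := by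
  filter_upwards [Ioc_mem_nhdsGT zero_lt_one] with ε hε
  exact Real.le_sqrt_of_sq_le ((hsol ε hε.1).norm_sq_le hε.1.le hε.2)

theorem tendsto_smul_pressure_of_isEpsStokesSolution
    (hsol : ∀ ε : ℝ, 0 < ε → IsEpsStokesSolution b f g ε (u ε) (p ε)) :
    Tendsto (fun ε : ℝ => ε • p ε) (𝓝[>] 0) (𝓝 0) := by
  refine squeeze_zero_norm' (a := fun ε => √(ε * (‖f‖ ^ 2 + ‖g‖ ^ 2))) ?_ ?_
  · filter_upwards [Ioc_mem_nhdsGT zero_lt_one] with ε hε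
    exact Real.le_sqrt_of_sq_le ((hsol ε hε.1).norm_smul_sq_le hε.1.le hε.2)
  · have hcont : Continuous fun ε : ℝ => √(ε * (‖f‖ ^ 2 + ‖g‖ ^ 2)) := by fun_prop
    simpa using (hcont.tendsto 0).mono_left nhdsWithin_le_nhds

theorem tendsto_apply_of_isEpsStokesSolution
    (hsol : ∀ ε : ℝ, 0 < ε → IsEpsStokesSolution b f g ε (u ε) (p ε)) (ψ : Q) :
    Tendsto (fun ε : ℝ => b (u ε) ψ) (𝓝[>] 0) (𝓝 0) := by
  have hlim : Tendsto (fun ε : ℝ => ⟪ε • p ε, ψ⟫ - ε * g ψ) (𝓝[>] 0) (𝓝 (⟪0, ψ⟫ - 0 * g ψ)) :=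
    ((tendsto_smul_pressure_of_isEpsStokesSolution hsol).inner tendsto_const_nhds).sub
      (tendsto_nhdsWithin_of_tendsto_nhds ((continuous_mul_const _).tendsto 0))
  rw [inner_zero_left, zero_mul, sub_zero] at hlim
  refine hlim.congr' ?_
  filter_upwards [self_mem_nhdsWithin] with ε hε
  exact ((hsol ε hε).apply_eq ψ).symm

variable [CompleteSpace V]

/-- For `b(φ, q) = ∫ ∇q · φ` this is the gradient `Q → H¹₀(Ω)ⁿ`, up to the Riesz isomorphism. -/
noncomputable def rieszFlip (b : V →L[ℝ] Q →L[ℝ] ℝ) : Q →L[ℝ] V :=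
  (InnerProductSpace.toDual ℝ V).symm.toContinuousLinearEquiv.toContinuousLinearMap ∘L b.flip

theorem inner_rieszFlip (v : V) (q : Q) :
    ⟪v, rieszFlip b q⟫ = b v q := by
  rw [real_inner_comm]
  exact InnerProductSpace.toDual_symm_apply

theorem mem_orthogonal_range_rieszFlip_iff {v : V} :
    v ∈ ((rieszFlip b).range)ᗮ ↔ ∀ q : Q, b v q = 0 := by
  simp only [Submodule.mem_orthogonal', LinearMap.mem_range, forall_exists_index,
    forall_apply_eq_imp_iff, ContinuousLinearMap.coe_coe, inner_rieszFlip]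

theorem tendsto_inner_of_mem_closure_range_rieszFlip
    (hsol : ∀ ε : ℝ, 0 < ε → IsEpsStokesSolution b f g ε (u ε) (p ε)) {z : V}
    (hz : z ∈ ((rieszFlip b).range).topologicalClosure) :
    Tendsto (fun ε : ℝ => ⟪u ε, z⟫) (𝓝[>] 0) (𝓝 0) := by
  rw [← SetLike.mem_coe, Submodule.topologicalClosure_coe] at hz
  refine tendsto_inner_zero_of_mem_closure (eventually_norm_le_of_isEpsStokesSolution hsol) ?_ hz
  rintro _ ⟨q, rfl⟩
  simpa only [ContinuousLinearMap.coe_coe, inner_rieszFlip] using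
    tendsto_apply_of_isEpsStokesSolution hsol q

end EpsStokes

theorem epsStokes_weak_convergence_to_stokes_general {V Q : Type*}
    [NormedAddCommGroup V] [InnerProductSpace ℝ V] [CompleteSpace V]
    [NormedAddCommGroup Q] [InnerProductSpace ℝ Q]
    (b : V →L[ℝ] Q →L[ℝ] ℝ)
    (f : V →L[ℝ] ℝ) (g : Q →L[ℝ] ℝ)
    (uS : V)
    (huSK : ∀ ψ : Q, b uS ψ = 0)
    (huS : ∀ φ : V, (∀ ψ : Q, b φ ψ = 0) → ⟪uS, φ⟫ = f φ)
    (u : ℝ → V) (p : ℝ → Q)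
    (hsol : ∀ ε : ℝ, 0 < ε →
      (∀ φ : V, ⟪u ε, φ⟫ + b φ (p ε) = f φ) ∧
      (∀ ψ : Q, ε * ⟪p ε, ψ⟫ - b (u ε) ψ = ε * g ψ)) :
    ∀ w : V, Filter.Tendsto (fun ε : ℝ => ⟪u ε, w⟫)
      (nhdsWithin 0 (Set.Ioi 0)) (nhds ⟪uS, w⟫) := by
  intro w
  let R := (rieszFlip b).range
  obtain ⟨z, hz, y, hy, rfl⟩ := R.topologicalClosure.exists_add_mem_mem_orthogonal w
  rw [Submodule.orthogonal_closure] at hy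
  have huSR : uS ∈ Rᗮ := mem_orthogonal_range_rieszFlip_iff.mpr huSK
  have huSz : ⟪uS, z⟫ = 0 := by
    rw [← Submodule.orthogonal_closure] at huSR
    exact Submodule.inner_left_of_mem_orthogonal hz huSR
  have hy_div_free := mem_orthogonal_range_rieszFlip_iff.mp hy
  have hinner_y : ∀ᶠ ε in 𝓝[>] 0, ⟪uS, y⟫ = ⟪u ε, y⟫ := by
    filter_upwards [self_mem_nhdsWithin] with ε hε
    rw [huS y hy_div_free, ← (hsol ε hε).1 y, hy_div_free, add_zero]
  simpa only [inner_add_right, huSz, zero_add] using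
    (tendsto_inner_of_mem_closure_range_rieszFlip hsol hz).add (tendsto_const_nhds.congr' hinner_y)

/-- Weak convergence part of Theorem 4.2: if `u_S` lies in the divergence-free subspace
`K = {v : b(v,ψ) = 0 ∀ψ}` and satisfies `⟪u_S,φ⟫ = f(φ)` for all `φ ∈ K`, then the ε-Stokes
velocities converge weakly to `u_S` in `V` as ε → 0⁺. -/
theorem epsStokes_weak_convergence_to_stokes {V Q : Type*}
    [NormedAddCommGroup V] [InnerProductSpace ℝ V] [CompleteSpace V]
    [NormedAddCommGroup Q] [InnerProductSpace ℝ Q] [CompleteSpace Q]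
    (b : V →L[ℝ] Q →L[ℝ] ℝ)
    (f : V →L[ℝ] ℝ) (g : Q →L[ℝ] ℝ)
    (uS : V)
    (huSK : ∀ ψ : Q, b uS ψ = 0)
    (huS : ∀ φ : V, (∀ ψ : Q, b φ ψ = 0) → ⟪uS, φ⟫ = f φ)
    (u : ℝ → V) (p : ℝ → Q)
    (hsol : ∀ ε : ℝ, 0 < ε →
      (∀ φ : V, ⟪u ε, φ⟫ + b φ (p ε) = f φ) ∧
      (∀ ψ : Q, ε * ⟪p ε, ψ⟫ - b (u ε) ψ = ε * g ψ)) :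
    ∀ w : V, Filter.Tendsto (fun ε : ℝ => ⟪u ε, w⟫)
      (nhdsWithin 0 (Set.Ioi 0)) (nhds ⟪uS, w⟫) :=
  epsStokes_weak_convergence_to_stokes_general b f g uS huSK huS u p hsol
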